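/- Let A be a Banach algebra with character φ, and suppose m ∈ A** satisfies ‖m‖ = m(φ) = 1 and ⟨m, f·a⟩ = φ(a)⟨m, f⟩ for all f ∈ A*, a ∈ A (a topologically left invariant φ-mean of norm one). If n ∈ A** satisfies ‖n‖ = n(φ) = 1, then n □ m is also a topologically left invariant φ-mean of norm one, where □ denotes the first Arens product, provided ⟨m, f·(ab)⟩ = ⟨m, f·(ba)⟩ for all a,b ∈ A and f ∈ A*. -/

import Mathlib

open scoped Topology
open Filter

noncomputable def fdot {A : Type*} [NonUnitalNormedRing A] [NormedSpace ℂ A]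
    [IsScalarTower ℂ A A] [SMulCommClass ℂ A A] (f : A →L[ℂ] ℂ) (a : A) : A →L[ℂ] ℂ :=
  f.comp (ContinuousLinearMap.mul ℂ A a)

/-- The map f ↦ (a ↦ f·a) as a continuous linear map; (fdotCLM f a) b = f (a * b). -/
noncomputable def fdotCLM {A : Type*} [NonUnitalNormedRing A] [NormedSpace ℂ A]
    [IsScalarTower ℂ A A] [SMulCommClass ℂ A A] :
    (A →L[ℂ] ℂ) →L[ℂ] (A →L[ℂ] (A →L[ℂ] ℂ)) :=
  ((ContinuousLinearMap.compL ℂ A (A →L[ℂ] A) (A →L[ℂ] ℂ)).flip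
    (ContinuousLinearMap.mul ℂ A)).comp (ContinuousLinearMap.compL ℂ A A ℂ)

/-- The map f ↦ m·f, where ⟨m·f, a⟩ = ⟨m, f·a⟩; then the first Arens product is
⟨n □ m, f⟩ = ⟨n, m·f⟩, i.e. n □ m = n.comp (arensL m). -/
noncomputable def arensL {A : Type*} [NonUnitalNormedRing A] [NormedSpace ℂ A]
    [IsScalarTower ℂ A A] [SMulCommClass ℂ A A] (m : (A →L[ℂ] ℂ) →L[ℂ] ℂ) :
    (A →L[ℂ] ℂ) →L[ℂ] (A →L[ℂ] ℂ) :=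
  ((ContinuousLinearMap.compL ℂ A (A →L[ℂ] ℂ) ℂ) m).comp fdotCLM

/-
Topological left invariance says exactly that m·f = ⟨m, f⟩ φ for every f ∈ A*, since
⟨m·f, a⟩ = ⟨m, f·a⟩ = φ(a)⟨m, f⟩. Hence n □ m = n(φ) m = m, and n □ m inherits every
property of m.
-/

section

variable {A : Type*} [NonUnitalNormedRing A] [NormedSpace ℂ A] [IsScalarTower ℂ A A]
  [SMulCommClass ℂ A A]

theorem arensL_apply_apply (m : (A →L[ℂ] ℂ) →L[ℂ] ℂ) (f : A →L[ℂ] ℂ) (a : A) :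
    arensL m f a = m (fdot f a) :=
  rfl

theorem arensL_eq_smul_of_leftInvariant {φ : A →L[ℂ] ℂ} {m : (A →L[ℂ] ℂ) →L[ℂ] ℂ}
    (hminv : ∀ (f : A →L[ℂ] ℂ) (a : A), m (fdot f a) = φ a * m f) (f : A →L[ℂ] ℂ) :
    arensL m f = m f • φ := by
  ext a
  rw [arensL_apply_apply, hminv, smul_apply, smul_eq_mul, mul_comm]

theorem comp_arensL_eq_of_leftInvariant {φ : A →L[ℂ] ℂ} {m n : (A →L[ℂ] ℂ) →L[ℂ] ℂ}
    (hminv : ∀ (f : A →L[ℂ] ℂ) (a : A), m (fdot f a) = φ a * m f) (hn1 : n φ = 1) :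
    n.comp (arensL m) = m := by
  ext f
  rw [ContinuousLinearMap.comp_apply, arensL_eq_smul_of_leftInvariant hminv, map_smul, hn1,
    smul_eq_mul, mul_one]

end

theorem stmt13_general {A : Type*} [NonUnitalNormedRing A] [NormedSpace ℂ A]
    [IsScalarTower ℂ A A] [SMulCommClass ℂ A A]
    (φ : A →L[ℂ] ℂ)
    (m n : (A →L[ℂ] ℂ) →L[ℂ] ℂ)
    (hmn : ‖m‖ = 1) (hm1 : m φ = 1)
    (hminv : ∀ (f : A →L[ℂ] ℂ) (a : A), m (fdot f a) = φ a * m f)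
    (hn1 : n φ = 1) :
    ‖n.comp (arensL m)‖ = 1 ∧ (n.comp (arensL m)) φ = 1 ∧
    ∀ (f : A →L[ℂ] ℂ) (a : A),
      (n.comp (arensL m)) (fdot f a) = φ a * (n.comp (arensL m)) f := by
  rw [comp_arensL_eq_of_leftInvariant hminv hn1]
  exact ⟨hmn, hm1, hminv⟩

/-- If m is a topologically left invariant φ-mean of norm one satisfying
⟨m, f·(ab)⟩ = ⟨m, f·(ba)⟩, and ‖n‖ = n(φ) = 1, then n □ m is again a
topologically left invariant φ-mean of norm one. -/
theorem stmt13 {A : Type*} [NonUnitalNormedRing A] [NormedSpace ℂ A]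
    [IsScalarTower ℂ A A] [SMulCommClass ℂ A A] [CompleteSpace A]
    (φ : A →L[ℂ] ℂ) (hφmul : ∀ a b : A, φ (a * b) = φ a * φ b) (hφ0 : φ ≠ 0)
    (m n : (A →L[ℂ] ℂ) →L[ℂ] ℂ)
    (hmn : ‖m‖ = 1) (hm1 : m φ = 1)
    (hminv : ∀ (f : A →L[ℂ] ℂ) (a : A), m (fdot f a) = φ a * m f)
    (hcom : ∀ (f : A →L[ℂ] ℂ) (a b : A), m (fdot f (a * b)) = m (fdot f (b * a)))
    (hnn : ‖n‖ = 1) (hn1 : n φ = 1) :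
    ‖n.comp (arensL m)‖ = 1 ∧ (n.comp (arensL m)) φ = 1 ∧
    ∀ (f : A →L[ℂ] ℂ) (a : A),
      (n.comp (arensL m)) (fdot f a) = φ a * (n.comp (arensL m)) f :=
  stmt13_general φ m n hmn hm1 hminv hn1
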